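/- Let Λ be a row-finite k-graph with no sources that is cofinal, and R a commutative ring with 1. Let a be a nonzero element of the center Z(KP_R(Λ)) written in normal form a = ∑_{(α,β)∈F} r_{α,β} s_α s_{β*}. Then {v ∈ Λ^0 : there exists (α,β) ∈ F with v = r(β)} = Λ^0. -/

import Mathlib

/-- A `k`-graph: a countable category `Λ` together with a degree functor
`d : Λ → ℕ^k` satisfying the unique factorization property.  The elements of
`Path` are the morphisms ("paths"); the objects are identified with the paths
of degree `0` (the "vertices"), and `r`, `s` assign to a path the identity
morphism at its range and source object.  Composition `comp p q` is only
meaningful when `s p = r q`. -/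
structure KGraph (k : ℕ) where
  Path : Type
  countable : Countable Path
  r : Path → Path
  s : Path → Path
  d : Path → (Fin k → ℕ)
  comp : Path → Path → Path
  d_r : ∀ p, d (r p) = 0
  d_s : ∀ p, d (s p) = 0
  r_of_deg_zero : ∀ p, d p = 0 → r p = p
  s_of_deg_zero : ∀ p, d p = 0 → s p = p
  r_comp : ∀ p q, s p = r q → r (comp p q) = r p
  s_comp : ∀ p q, s p = r q → s (comp p q) = s q
  d_comp : ∀ p q, s p = r q → d (comp p q) = d p + d q
  comp_assoc : ∀ p q t, s p = r q → s q = r t →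
    comp (comp p q) t = comp p (comp q t)
  id_comp : ∀ p, comp (r p) p = p
  comp_id : ∀ p, comp p (s p) = p
  factor : ∀ (p : Path) (m n : Fin k → ℕ), d p = m + n →
    ∃! μν : Path × Path, d μν.1 = m ∧ d μν.2 = n ∧ s μν.1 = r μν.2 ∧
      comp μν.1 μν.2 = p

namespace KGraph

variable {k : ℕ} (Λ : KGraph k)

/-- A vertex is a path of degree `0`. -/
def IsVertex (v : Λ.Path) : Prop := Λ.d v = 0

/-- `Λ` is row-finite if `vΛ^n` is finite for every vertex `v` and `n ∈ ℕ^k`. -/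
def RowFinite : Prop :=
  ∀ v, Λ.d v = 0 → ∀ n : Fin k → ℕ, {p : Λ.Path | Λ.r p = v ∧ Λ.d p = n}.Finite

/-- `Λ` has no sources if `vΛ^n ≠ ∅` for every vertex `v` and `n ∈ ℕ^k`. -/
def NoSources : Prop :=
  ∀ v, Λ.d v = 0 → ∀ n : Fin k → ℕ, ∃ p, Λ.r p = v ∧ Λ.d p = n

open Classical in
/-- `Λ.seg lam p q` is the middle segment `lam(p,q)`: whenever `p ≤ q ≤ d lam`,
it is the unique path `μ` of degree `q - p` arising in a factorization
`lam = α μ β` with `d α = p` (unique by the factorization property). -/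
noncomputable def seg (lam : Λ.Path) (p q : Fin k → ℕ) : Λ.Path :=
  if h : ∃ μ, ∃ α β, Λ.d α = p ∧ Λ.d μ = q - p ∧ Λ.s α = Λ.r μ ∧
      Λ.s μ = Λ.r β ∧ Λ.comp α (Λ.comp μ β) = lam then h.choose else lam

/-- Aperiodicity, in the formulation of [RS07, Lemma 3.2(iv)]. -/
def Aperiodic : Prop :=
  ∀ v, Λ.d v = 0 → ∀ m n : Fin k → ℕ, m ≠ n →
    ∃ lam, Λ.r lam = v ∧ m ⊔ n ≤ Λ.d lam ∧
      Λ.seg lam m (m + Λ.d lam - (m ⊔ n)) ≠ Λ.seg lam n (n + Λ.d lam - (m ⊔ n))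

/-- An infinite path: a degree-preserving functor `x : Ω_k → Λ`, recorded by
its segments `x.seg m n` (of degree `n - m`) for `m ≤ n`; `x.seg m m` is the
vertex `x(m)`. -/
structure InfinitePath (Λ : KGraph k) where
  seg : (Fin k → ℕ) → (Fin k → ℕ) → Λ.Path
  d_seg : ∀ m n, m ≤ n → Λ.d (seg m n) = n - m
  r_seg : ∀ m n, m ≤ n → Λ.r (seg m n) = seg m m
  s_seg : ∀ m n, m ≤ n → Λ.s (seg m n) = seg n n
  comp_seg : ∀ m n q, m ≤ n → n ≤ q → Λ.comp (seg m n) (seg n q) = seg m q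

/-- `Λ` is cofinal if for every infinite path `x` and vertex `v` there is
`m ∈ ℕ^k` with `vΛx(m) ≠ ∅`. -/
def Cofinal : Prop :=
  ∀ x : InfinitePath Λ, ∀ v, Λ.d v = 0 →
    ∃ m : Fin k → ℕ, ∃ lam, Λ.r lam = v ∧ Λ.s lam = x.seg m m

/-- A Kumjian-Pask `Λ`-family in a (not necessarily unital) ring `A`.  Here
`S p` plays the role of `s_p` and `S' p` the role of the ghost element
`s_{p*}`, with the convention `S v = S' v = p_v` for vertices `v`. -/
structure IsKPFamily {A : Type*} [NonUnitalRing A] (S S' : Λ.Path → A) : Prop where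
  /-- for a vertex `v`, both `S v` and `S' v` denote `p_v` -/
  vertex_eq : ∀ v, Λ.d v = 0 → S' v = S v
  /-- (KP1): the `p_v` are mutually orthogonal idempotents -/
  orthogonal : ∀ u v, Λ.d u = 0 → Λ.d v = 0 →
    (u = v → S u * S v = S u) ∧ (u ≠ v → S u * S v = 0)
  /-- (KP2): `S_p S_q = S_{pq}` (this also subsumes the unit laws
  `P_{r p} S_p = S_p = S_p P_{s p}`, via `id_comp` and `comp_id`) -/
  mul_comp : ∀ p q, Λ.s p = Λ.r q → S p * S q = S (Λ.comp p q)
  /-- (KP2) for ghost paths: `S_{q*} S_{p*} = S_{(pq)*}` -/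
  ghost_mul_comp : ∀ p q, Λ.s p = Λ.r q → S' q * S' p = S' (Λ.comp p q)
  /-- (KP3): `S_{p*} S_q = δ_{p,q} P_{s p}` for `d p = d q` -/
  kp3 : ∀ p q, Λ.d p = Λ.d q →
    (p = q → S' p * S q = S (Λ.s p)) ∧ (p ≠ q → S' p * S q = 0)
  /-- (KP4): `P_v = ∑_{p ∈ vΛ^n} S_p S_{p*}` for every vertex `v` and `n ≠ 0` -/
  kp4 : ∀ v, Λ.d v = 0 → ∀ n : Fin k → ℕ, n ≠ 0 → ∀ T : Finset Λ.Path,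
    (∀ p, p ∈ T ↔ (Λ.r p = v ∧ Λ.d p = n)) → S v = ∑ p ∈ T, S p * S' p

end KGraph

/-- `(A, S, S')` is *the* Kumjian-Pask algebra `KP_R(Λ)`: `(S, S')` is a
Kumjian-Pask `Λ`-family in the `R`-algebra `A` with `r • p_v ≠ 0` for all
`r ≠ 0` (so in particular the family is nonzero), and `A` has the universal
property: every Kumjian-Pask `Λ`-family in an `R`-algebra `B` is the image of
`(S, S')` under a unique `R`-algebra homomorphism. -/
structure IsKumjianPaskAlgebra (R : Type*) [CommRing R] {k : ℕ} (Λ : KGraph k)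
    (A : Type*) [NonUnitalRing A] [Module R A] [SMulCommClass R A A]
    [IsScalarTower R A A] (S S' : Λ.Path → A) : Prop where
  isFamily : Λ.IsKPFamily S S'
  smul_vertex_ne_zero : ∀ v, Λ.d v = 0 → ∀ r : R, r ≠ 0 → r • S v ≠ 0
  universal : ∀ (B : Type*) [NonUnitalRing B] [Module R B] [SMulCommClass R B B]
    [IsScalarTower R B B] (T T' : Λ.Path → B), Λ.IsKPFamily T T' →
    ∃! φ : A →ₙₐ[R] B, (∀ p, φ (S p) = T p) ∧ ∀ p, φ (S' p) = T' p

variable {k : ℕ}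

/-!
If a vertex `v` is the range of no `β` with `(α, β) ∈ F`, then `s_{β*} p_v = 0` for all these `β`,
so `a p_v = 0`. For central `a` the vertices `u` with `p_u a = 0` form a hereditary set `H`
(`p_{s(λ)} a = s_{λ*} s_λ a` and `s_λ a = p_{r(λ)} a s_λ`), and by (KP4) every vertex outside `H`
is the range of an edge of degree `(1, …, 1)` whose source is again outside `H`. Starting outside
`H`, such edges concatenate to an infinite path avoiding `H`; cofinality lets the vertex `v ∈ H`
reach it, contradicting heredity. So `p_w a = 0` for every vertex `w`, and with `w` ranging over
the ranges of the `β`, `a = a ∑_w p_w = ∑_w p_w a = 0`.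
-/

namespace KGraph

variable {Λ : KGraph k}

lemma r_s (p : Λ.Path) : Λ.r (Λ.s p) = Λ.s p := Λ.r_of_deg_zero _ (Λ.d_s p)

lemma s_r (p : Λ.Path) : Λ.s (Λ.r p) = Λ.r p := Λ.s_of_deg_zero _ (Λ.d_r p)

lemma r_r (p : Λ.Path) : Λ.r (Λ.r p) = Λ.r p := Λ.r_of_deg_zero _ (Λ.d_r p)

lemma s_s (p : Λ.Path) : Λ.s (Λ.s p) = Λ.s p := Λ.s_of_deg_zero _ (Λ.d_s p)

lemma eq_and_eq_of_comp_eq_comp {α β α' β' : Λ.Path} (hd : Λ.d α = Λ.d α')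
    (h : Λ.s α = Λ.r β) (h' : Λ.s α' = Λ.r β') (heq : Λ.comp α β = Λ.comp α' β') :
    α = α' ∧ β = β' := by
  have hdβ : Λ.d β' = Λ.d β := by
    have := Λ.d_comp α' β' h'
    rw [← heq, Λ.d_comp α β h, hd] at this
    exact (add_left_cancel this).symm
  obtain ⟨_, -, huniq⟩ := Λ.factor (Λ.comp α β) (Λ.d α) (Λ.d β) (Λ.d_comp α β h)
  have := (huniq (α, β) ⟨rfl, rfl, h, rfl⟩).trans
    (huniq (α', β') ⟨hd.symm, hdβ, h', heq.symm⟩).symm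
  exact Prod.mk.inj this

lemma exists_comp_comp_eq {lam : Λ.Path} {m n : Fin k → ℕ} (hmn : m ≤ n)
    (hn : n ≤ Λ.d lam) :
    ∃ α μ β, Λ.d α = m ∧ Λ.d μ = n - m ∧ Λ.s α = Λ.r μ ∧ Λ.s μ = Λ.r β ∧
      Λ.comp α (Λ.comp μ β) = lam := by
  obtain ⟨⟨γ, β⟩, ⟨hγ, -, hγβ, rfl⟩, -⟩ :=
    Λ.factor lam n (Λ.d lam - n) (add_tsub_cancel_of_le hn).symm
  obtain ⟨⟨α, μ⟩, ⟨hα, hμ, hαμ, rfl⟩, -⟩ :=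
    Λ.factor γ m (n - m) (hγ.trans (add_tsub_cancel_of_le hmn).symm)
  have hμβ : Λ.s μ = Λ.r β := by rwa [Λ.s_comp _ _ hαμ] at hγβ
  exact ⟨α, μ, β, hα, hμ, hαμ, hμβ, (Λ.comp_assoc _ _ _ hαμ hμβ).symm⟩

lemma seg_eq_of_comp {lam α μ β : Λ.Path} {m n : Fin k → ℕ} (hα : Λ.d α = m) (hμ : Λ.d μ = n - m)
    (h₁ : Λ.s α = Λ.r μ) (h₂ : Λ.s μ = Λ.r β) (h : Λ.comp α (Λ.comp μ β) = lam) :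
    Λ.seg lam m n = μ := by
  have hex : ∃ μ, ∃ α β, Λ.d α = m ∧ Λ.d μ = n - m ∧ Λ.s α = Λ.r μ ∧
      Λ.s μ = Λ.r β ∧ Λ.comp α (Λ.comp μ β) = lam := ⟨μ, α, β, hα, hμ, h₁, h₂, h⟩
  rw [seg, dif_pos hex]
  obtain ⟨α', β', hα', hμ', h₁', h₂', h'⟩ := hex.choose_spec
  obtain ⟨-, hμβ⟩ := eq_and_eq_of_comp_eq_comp (hα'.trans hα.symm)
    (h₁'.trans (Λ.r_comp _ _ h₂').symm) (h₁.trans (Λ.r_comp _ _ h₂).symm) (h'.trans h.symm)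
  exact (eq_and_eq_of_comp_eq_comp (hμ'.trans hμ.symm) h₂' h₂ hμβ).1

lemma seg_self_eq_r_of_comp {lam α μ β : Λ.Path} {m : Fin k → ℕ} (hα : Λ.d α = m)
    (h₁ : Λ.s α = Λ.r μ) (h₂ : Λ.s μ = Λ.r β) (h : Λ.comp α (Λ.comp μ β) = lam) :
    Λ.seg lam m m = Λ.r μ := by
  have hμβ : Λ.r (Λ.comp μ β) = Λ.r μ := Λ.r_comp _ _ h₂
  refine seg_eq_of_comp hα (by rw [Λ.d_r, tsub_self]) (h₁.trans (r_r μ).symm)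
    ((s_r μ).trans hμβ.symm) ?_
  rwa [← hμβ, Λ.id_comp]

lemma seg_self_eq_s_of_comp {lam α μ β : Λ.Path} {m n : Fin k → ℕ} (hα : Λ.d α = m)
    (hμ : Λ.d μ = n - m) (hmn : m ≤ n) (h₁ : Λ.s α = Λ.r μ) (h₂ : Λ.s μ = Λ.r β)
    (h : Λ.comp α (Λ.comp μ β) = lam) :
    Λ.seg lam n n = Λ.s μ := by
  refine seg_eq_of_comp (α := Λ.comp α μ) (β := β) ?_ (by rw [Λ.d_s, tsub_self])
    (by rw [Λ.s_comp _ _ h₁, r_s]) (by rw [s_s, h₂]) ?_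
  · rw [Λ.d_comp _ _ h₁, hα, hμ, add_tsub_cancel_of_le hmn]
  · rw [h₂, Λ.id_comp, Λ.comp_assoc _ _ _ h₁ h₂, h]

variable {lam : Λ.Path} {m n q : Fin k → ℕ}

lemma d_seg (hmn : m ≤ n) (hn : n ≤ Λ.d lam) : Λ.d (Λ.seg lam m n) = n - m := by
  obtain ⟨α, μ, β, hα, hμ, h₁, h₂, h⟩ := exists_comp_comp_eq hmn hn
  rw [seg_eq_of_comp hα hμ h₁ h₂ h, hμ]

lemma r_seg (hmn : m ≤ n) (hn : n ≤ Λ.d lam) :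
    Λ.r (Λ.seg lam m n) = Λ.seg lam m m := by
  obtain ⟨α, μ, β, hα, hμ, h₁, h₂, h⟩ := exists_comp_comp_eq hmn hn
  rw [seg_eq_of_comp hα hμ h₁ h₂ h, seg_self_eq_r_of_comp hα h₁ h₂ h]

lemma s_seg (hmn : m ≤ n) (hn : n ≤ Λ.d lam) :
    Λ.s (Λ.seg lam m n) = Λ.seg lam n n := by
  obtain ⟨α, μ, β, hα, hμ, h₁, h₂, h⟩ := exists_comp_comp_eq hmn hn
  rw [seg_eq_of_comp hα hμ h₁ h₂ h, seg_self_eq_s_of_comp hα hμ hmn h₁ h₂ h]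

lemma seg_d_d_eq_s (lam : Λ.Path) : Λ.seg lam (Λ.d lam) (Λ.d lam) = Λ.s lam :=
  seg_eq_of_comp rfl (by rw [Λ.d_s, tsub_self]) (r_s lam).symm ((s_s lam).trans (r_s lam).symm)
    (by nth_rw 2 [← s_s lam]; rw [Λ.comp_id, Λ.comp_id])

lemma seg_comp_seg (hmn : m ≤ n) (hnq : n ≤ q) (hq : q ≤ Λ.d lam) :
    Λ.comp (Λ.seg lam m n) (Λ.seg lam n q) = Λ.seg lam m q := by
  obtain ⟨α, μ, β, hα, hμ, h₁, h₂, h⟩ := exists_comp_comp_eq (hmn.trans hnq) hq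
  obtain ⟨⟨μ₁, μ₂⟩, ⟨hμ₁, hμ₂, h₁₂, rfl⟩, -⟩ := Λ.factor μ (n - m) (q - n)
    (by rw [hμ, add_comm, tsub_add_tsub_cancel hnq hmn])
  have h₁' : Λ.s α = Λ.r μ₁ := by rwa [Λ.r_comp _ _ h₁₂] at h₁
  have h₂' : Λ.s μ₂ = Λ.r β := by rwa [Λ.s_comp _ _ h₁₂] at h₂
  have h₂₁ : Λ.s μ₁ = Λ.r (Λ.comp μ₂ β) := by rw [Λ.r_comp _ _ h₂']; exact h₁₂
  have hseg₁ : Λ.seg lam m n = μ₁ :=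
    seg_eq_of_comp hα hμ₁ h₁' h₂₁ (by rw [← Λ.comp_assoc _ _ _ h₁₂ h₂', h])
  have hseg₂ : Λ.seg lam n q = μ₂ := by
    refine seg_eq_of_comp (α := Λ.comp α μ₁) ?_ hμ₂ (by rw [Λ.s_comp _ _ h₁']; exact h₁₂) h₂' ?_
    · rw [Λ.d_comp _ _ h₁', hα, hμ₁, add_tsub_cancel_of_le hmn]
    · rw [Λ.comp_assoc _ _ _ h₁' h₂₁, ← Λ.comp_assoc _ _ _ h₁₂ h₂', h]
  rw [hseg₁, hseg₂, seg_eq_of_comp hα hμ h₁ h₂ h]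

lemma seg_comp_of_le {t : Λ.Path} (ht : Λ.s lam = Λ.r t) (hmn : m ≤ n) (hn : n ≤ Λ.d lam) :
    Λ.seg (Λ.comp lam t) m n = Λ.seg lam m n := by
  obtain ⟨α, μ, β, hα, hμ, h₁, h₂, h⟩ := exists_comp_comp_eq hmn hn
  have hβ : Λ.s β = Λ.r t := by
    rwa [← h, Λ.s_comp _ _ (h₁.trans (Λ.r_comp _ _ h₂).symm), Λ.s_comp _ _ h₂] at ht
  have hμβ : Λ.s (Λ.comp μ β) = Λ.r t := by rw [Λ.s_comp _ _ h₂]; exact hβ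
  have hαμβ : Λ.s α = Λ.r (Λ.comp μ β) := by rw [Λ.r_comp _ _ h₂]; exact h₁
  rw [seg_eq_of_comp hα hμ h₁ h₂ h]
  refine seg_eq_of_comp hα hμ h₁ (by rw [Λ.r_comp _ _ hβ]; exact h₂) ?_
  rw [← Λ.comp_assoc _ _ _ h₂ hβ, ← Λ.comp_assoc _ _ _ hαμβ hμβ, h]

def IsPrefix (p q : Λ.Path) : Prop := ∃ e, Λ.s p = Λ.r e ∧ Λ.comp p e = q

section Chain

variable {c : ℕ → Λ.Path}

lemma d_le_d_of_chain (hc : ∀ j, Λ.IsPrefix (c j) (c (j + 1)))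
    {j j' : ℕ} (hjj' : j ≤ j') : Λ.d (c j) ≤ Λ.d (c j') := by
  induction j', hjj' using Nat.le_induction with
  | base => rfl
  | succ i _ ih =>
    obtain ⟨e, he, hce⟩ := hc i
    rw [← hce, Λ.d_comp _ _ he]
    exact ih.trans le_self_add

lemma seg_chain_of_le (hc : ∀ j, Λ.IsPrefix (c j) (c (j + 1)))
    {j j' : ℕ} (hjj' : j ≤ j') {m n : Fin k → ℕ} (hmn : m ≤ n) (hn : n ≤ Λ.d (c j)) :
    Λ.seg (c j') m n = Λ.seg (c j) m n := by
  induction j', hjj' using Nat.le_induction with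
  | base => rfl
  | succ i hji ih =>
    obtain ⟨e, he, hce⟩ := hc i
    rw [← hce, seg_comp_of_le he hmn (hn.trans (d_le_d_of_chain hc hji)), ih]

end Chain

lemma le_const_sum (n : Fin k → ℕ) : n ≤ fun _ => ∑ i, n i :=
  fun i => Finset.single_le_sum (fun _ _ => Nat.zero_le _) (Finset.mem_univ i)

/-- Any index `j` with `n ≤ d (c j)` would do in place of `∑ i, n i`: by `seg_chain_of_le` all
of them give the same segment `(m, n)`. -/
noncomputable def InfinitePath.ofChain (c : ℕ → Λ.Path) (hd : ∀ j, (fun _ => j) ≤ Λ.d (c j))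
    (hc : ∀ j, Λ.IsPrefix (c j) (c (j + 1))) : Λ.InfinitePath where
  seg m n := Λ.seg (c (∑ i, n i)) m n
  d_seg _ n h := KGraph.d_seg h ((le_const_sum n).trans (hd _))
  r_seg m n h := (KGraph.r_seg h ((le_const_sum n).trans (hd _))).trans
    (seg_chain_of_le hc (Finset.sum_le_sum fun i _ => h i) le_rfl
      ((le_const_sum m).trans (hd _)))
  s_seg _ n h := KGraph.s_seg h ((le_const_sum n).trans (hd _))
  comp_seg m n q h₁ h₂ := by
    rw [← seg_chain_of_le hc (Finset.sum_le_sum fun i _ => h₂ i) h₁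
      ((le_const_sum n).trans (hd _))]
    exact seg_comp_seg h₁ h₂ ((le_const_sum q).trans (hd _))

lemma InfinitePath.exists_path_ofChain_seg_self {c : ℕ → Λ.Path}
    (hd : ∀ j, (fun _ => j) ≤ Λ.d (c j)) (hc : ∀ j, Λ.IsPrefix (c j) (c (j + 1))) (m : Fin k → ℕ) :
    ∃ j μ, Λ.r μ = (ofChain c hd hc).seg m m ∧ Λ.s μ = Λ.s (c j) := by
  have hm : m ≤ Λ.d (c (∑ i, m i)) := (le_const_sum m).trans (hd _)
  exact ⟨_, _, KGraph.r_seg hm le_rfl, (KGraph.s_seg hm le_rfl).trans (seg_d_d_eq_s _)⟩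

lemma exists_chain_of_forall_exists_edge {P : Λ.Path → Prop}
    (hP : ∀ w, Λ.d w = 0 → P w → ∃ e, Λ.r e = w ∧ Λ.d e = (fun _ => 1) ∧ P (Λ.s e))
    {w : Λ.Path} (hw : Λ.d w = 0) (hPw : P w) :
    ∃ c : ℕ → Λ.Path, (∀ j, Λ.d (c j) = fun _ => j) ∧
      (∀ j, Λ.IsPrefix (c j) (c (j + 1))) ∧ ∀ j, P (Λ.s (c j)) := by
  choose e hre hde hPe using hP
  let next : {p // P (Λ.s p)} → {p // P (Λ.s p)} := fun p =>
    ⟨Λ.comp p.1 (e _ (Λ.d_s p.1) p.2), by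
      rw [Λ.s_comp _ _ (hre _ _ _).symm]; exact hPe _ _ _⟩
  let c : ℕ → {p // P (Λ.s p)} := fun j => next^[j] ⟨w, by rwa [Λ.s_of_deg_zero w hw]⟩
  have hc : ∀ j, (c (j + 1)).1 = Λ.comp (c j).1 (e _ (Λ.d_s (c j).1) (c j).2) := fun j =>
    congrArg Subtype.val (Function.iterate_succ_apply' next j _)
  refine ⟨fun j => (c j).1, fun j => ?_, fun j => ⟨_, (hre _ _ _).symm, (hc j).symm⟩,
    fun j => (c j).2⟩
  induction j with
  | zero => exact hw
  | succ j ih =>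
    change Λ.d (c (j + 1)).1 = _
    rw [hc, Λ.d_comp _ _ (hre _ _ _).symm, ih, hde]
    rfl

lemma Cofinal.forall_of_hereditary_of_saturated (hcof : Λ.Cofinal) {H : Λ.Path → Prop}
    (hher : ∀ p, H (Λ.r p) → H (Λ.s p))
    (hsat : ∀ w, Λ.d w = 0 → ¬ H w → ∃ e, Λ.r e = w ∧ Λ.d e = (fun _ => 1) ∧ ¬ H (Λ.s e))
    {v : Λ.Path} (hv : Λ.d v = 0) (hHv : H v) {w : Λ.Path} (hw : Λ.d w = 0) : H w := by
  by_contra hHw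
  obtain ⟨c, hd, hc, hcH⟩ := exists_chain_of_forall_exists_edge hsat hw hHw
  obtain ⟨m, lam, hlam, hlamx⟩ := hcof (.ofChain c (fun j => (hd j).ge) hc) v hv
  obtain ⟨j, μ, hμ, hμc⟩ := InfinitePath.exists_path_ofChain_seg_self (fun j => (hd j).ge) hc m
  have hcomp : Λ.s lam = Λ.r μ := hlamx.trans hμ.symm
  refine hcH j ?_
  rw [← hμc, ← Λ.s_comp _ _ hcomp]
  exact hher _ (by rwa [Λ.r_comp _ _ hcomp, hlam])

end KGraph

namespace KGraph.IsKPFamily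

variable {Λ : KGraph k} {A : Type*} [NonUnitalRing A] {S S' : Λ.Path → A}

lemma range_mul (hS : Λ.IsKPFamily S S') (p : Λ.Path) : S (Λ.r p) * S p = S p := by
  rw [hS.mul_comp _ _ (s_r p), Λ.id_comp]

lemma source_mul_ghost (hS : Λ.IsKPFamily S S') (q : Λ.Path) : S (Λ.s q) * S' q = S' q := by
  rw [← hS.vertex_eq _ (Λ.d_s q), hS.ghost_mul_comp _ _ (r_s q).symm, Λ.comp_id]

lemma ghost_mul_self (hS : Λ.IsKPFamily S S') (p : Λ.Path) : S' p * S p = S (Λ.s p) :=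
  (hS.kp3 p p rfl).1 rfl

lemma ghost_mul_range (hS : Λ.IsKPFamily S S') (q : Λ.Path) : S' q * S (Λ.r q) = S' q := by
  rw [← hS.vertex_eq _ (Λ.d_r q), hS.ghost_mul_comp _ _ (s_r q), Λ.id_comp]

lemma ghost_mul_vertex_of_ne (hS : Λ.IsKPFamily S S') {q v : Λ.Path} (hv : Λ.d v = 0)
    (hqv : Λ.r q ≠ v) : S' q * S v = 0 := by
  rw [← hS.ghost_mul_range, mul_assoc, (hS.orthogonal _ _ (Λ.d_r q) hv).2 hqv, mul_zero]

lemma vertex_eq_sum (hS : Λ.IsKPFamily S S') (hrow : Λ.RowFinite) {w : Λ.Path}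
    (hw : Λ.d w = 0) (n : Fin k → ℕ) :
    S w = ∑ p ∈ (hrow w hw n).toFinset, S p * S' p := by
  by_cases hn : n = 0
  · subst hn
    have hT : (hrow w hw 0).toFinset = {w} := by
      ext p
      simp only [Set.Finite.mem_toFinset, Set.mem_ofPred_eq, Finset.mem_singleton]
      refine ⟨fun ⟨hr, hd⟩ => (Λ.r_of_deg_zero p hd).symm.trans hr, ?_⟩
      rintro rfl
      exact ⟨Λ.r_of_deg_zero p hw, hw⟩
    rw [hT, Finset.sum_singleton, hS.vertex_eq w hw, (hS.orthogonal w w hw hw).1 rfl]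
  · exact hS.kp4 w hw n hn _ fun p => (hrow w hw n).mem_toFinset

lemma source_mul_eq_zero_of_range_mul_eq_zero (hS : Λ.IsKPFamily S S') {a : A}
    (hcen : ∀ b, a * b = b * a) (p : Λ.Path) (hp : S (Λ.r p) * a = 0) : S (Λ.s p) * a = 0 := by
  have : S p * a = 0 := by
    rw [← hS.range_mul p, mul_assoc, ← hcen, ← mul_assoc, hp, zero_mul]
  rw [← hS.ghost_mul_self, mul_assoc, this, mul_zero]

lemma exists_source_mul_ne_zero (hS : Λ.IsKPFamily S S') {a : A}
    (hcen : ∀ b, a * b = b * a) (hrow : Λ.RowFinite) {w : Λ.Path} (hw : Λ.d w = 0)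
    (n : Fin k → ℕ) (hwa : S w * a ≠ 0) : ∃ p, Λ.r p = w ∧ Λ.d p = n ∧ S (Λ.s p) * a ≠ 0 := by
  by_contra! h
  refine hwa ?_
  rw [hS.vertex_eq_sum hrow hw n, Finset.sum_mul]
  refine Finset.sum_eq_zero fun p hp => ?_
  obtain ⟨hr, hd⟩ := (hrow w hw n).mem_toFinset.mp hp
  have : S' p * a = 0 := by
    rw [← hS.source_mul_ghost, mul_assoc, ← hcen (S' p), ← mul_assoc, h p hr hd, zero_mul]
  rw [mul_assoc, this, mul_zero]

lemma vertex_mul_eq_zero_of_cofinal (hS : Λ.IsKPFamily S S') {a : A}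
    (hcen : ∀ b, a * b = b * a) (hrow : Λ.RowFinite) (hcof : Λ.Cofinal) {v : Λ.Path}
    (hv : Λ.d v = 0) (hva : S v * a = 0) {w : Λ.Path} (hw : Λ.d w = 0) : S w * a = 0 :=
  hcof.forall_of_hereditary_of_saturated (H := fun u => S u * a = 0)
    (hS.source_mul_eq_zero_of_range_mul_eq_zero hcen)
    (fun _ hu => hS.exists_source_mul_ne_zero hcen hrow hu _) hv hva hw

variable {R : Type*} [Semiring R] [Module R A] [IsScalarTower R A A]

lemma sum_smul_mul_ghost_mul_vertex_eq_zero (hS : Λ.IsKPFamily S S')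
    (F : Finset (Λ.Path × Λ.Path)) (c : Λ.Path × Λ.Path → R) {v : Λ.Path} (hv : Λ.d v = 0)
    (hF : ∀ x ∈ F, Λ.r x.2 ≠ v) : (∑ x ∈ F, c x • (S x.1 * S' x.2)) * S v = 0 := by
  rw [Finset.sum_mul]
  refine Finset.sum_eq_zero fun x hx => ?_
  rw [smul_mul_assoc, mul_assoc, hS.ghost_mul_vertex_of_ne hv (hF x hx), mul_zero, smul_zero]

lemma sum_smul_mul_ghost_mul_sum_vertex (hS : Λ.IsKPFamily S S')
    (F : Finset (Λ.Path × Λ.Path)) (c : Λ.Path × Λ.Path → R) {W : Finset Λ.Path}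
    (hW : ∀ w ∈ W, Λ.d w = 0) (hF : ∀ x ∈ F, Λ.r x.2 ∈ W) :
    (∑ x ∈ F, c x • (S x.1 * S' x.2)) * ∑ w ∈ W, S w = ∑ x ∈ F, c x • (S x.1 * S' x.2) := by
  rw [Finset.sum_mul]
  refine Finset.sum_congr rfl fun x hx => ?_
  rw [smul_mul_assoc, mul_assoc, Finset.mul_sum, Finset.sum_eq_single_of_mem _ (hF x hx)
    fun w hw hne => hS.ghost_mul_vertex_of_ne (hW w hw) (Ne.symm hne), hS.ghost_mul_range]

end KGraph.IsKPFamily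

theorem center_normal_form_W_eq_vertices_general
    (Λ : KGraph k) (hrow : Λ.RowFinite)
    (R : Type*) [CommRing R]
    {A : Type*} [NonUnitalRing A] [Module R A] [SMulCommClass R A A]
    [IsScalarTower R A A] {S S' : Λ.Path → A}
    (hKP : IsKumjianPaskAlgebra R Λ A S S')
    (hcof : Λ.Cofinal)
    (a : A) (ha : a ≠ 0) (hcen : ∀ b : A, a * b = b * a)
    (F : Finset (Λ.Path × Λ.Path)) (c : Λ.Path × Λ.Path → R)
    (hnf : a = ∑ x ∈ F, c x • (S x.1 * S' x.2)) :
    {v : Λ.Path | Λ.d v = 0 ∧ ∃ x ∈ F, v = Λ.r x.2} =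
      {v : Λ.Path | Λ.d v = 0} := by
  classical
  have hS := hKP.isFamily
  ext v
  refine ⟨And.left, fun hv => ⟨hv, ?_⟩⟩
  by_contra! hvF
  have hva : S v * a = 0 := by
    rw [← hcen, hnf]
    exact hS.sum_smul_mul_ghost_mul_vertex_eq_zero F c hv fun x hx h => hvF x hx h.symm
  have hW : ∀ w ∈ F.image (fun x => Λ.r x.2), Λ.d w = 0 := by
    simp only [Finset.mem_image, forall_exists_index, and_imp]
    rintro _ x - rfl
    exact Λ.d_r x.2
  refine ha ?_
  rw [hnf, ← hS.sum_smul_mul_ghost_mul_sum_vertex F c hW fun x hx => Finset.mem_image_of_mem _ hx,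
    ← hnf, Finset.mul_sum]
  exact Finset.sum_eq_zero fun w hw =>
    (hcen _).trans (hS.vertex_mul_eq_zero_of_cofinal hcen hrow hcof hv hva (hW w hw))

/-- Suppose `Λ` is cofinal, and let `a` be a nonzero element of the center of
`KP_R(Λ)` in normal form `a = ∑_{(α,β) ∈ F} r_{α,β} s_α s_{β*}`.  Then
`{v ∈ Λ⁰ : ∃ (α,β) ∈ F, v = r(β)} = Λ⁰`. -/
theorem center_normal_form_W_eq_vertices
    (Λ : KGraph k) (hrow : Λ.RowFinite) (hsrc : Λ.NoSources)
    (R : Type*) [CommRing R]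
    {A : Type*} [NonUnitalRing A] [Module R A] [SMulCommClass R A A]
    [IsScalarTower R A A] {S S' : Λ.Path → A}
    (hKP : IsKumjianPaskAlgebra R Λ A S S')
    (hcof : Λ.Cofinal)
    (a : A) (ha : a ≠ 0) (hcen : ∀ b : A, a * b = b * a)
    (F : Finset (Λ.Path × Λ.Path)) (c : Λ.Path × Λ.Path → R) (m : Fin k → ℕ)
    (hdm : ∀ x ∈ F, Λ.d x.2 = m)
    (hss : ∀ x ∈ F, Λ.s x.1 = Λ.s x.2)
    (hc : ∀ x ∈ F, c x ≠ 0)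
    (hnf : a = ∑ x ∈ F, c x • (S x.1 * S' x.2)) :
    {v : Λ.Path | Λ.d v = 0 ∧ ∃ x ∈ F, v = Λ.r x.2} =
      {v : Λ.Path | Λ.d v = 0} :=
  center_normal_form_W_eq_vertices_general Λ hrow R hKP hcof a ha hcen F c hnf
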